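/- arXiv:1111.1351 — 2 statements merged into one kernel-verified Lean document; each statement's English description precedes it below -/
import Mathlib

section
/- Fix β ≥ 1 and n ∈ ℕ, and let A_{n,β} be the Dumitriu–Edelman tridiagonal model. For every odd natural number p, E[Tr(A_{n,β}^p)] = 0. -/
open MeasureTheory ProbabilityTheory Filter Finset

/-- The chi distribution with `r` degrees of freedom: the law of `√Y` where
`Y` is Gamma-distributed with shape `r/2` and rate `1/2`. -/
noncomputable def chiDist (r : ℝ) : Measure ℝ :=
  (gammaMeasure (r / 2) (1 / 2)).map Real.sqrt

/-- Symmetric tridiagonal matrix with diagonal `d` and off-diagonal `e`. -/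
noncomputable def triDiagOf (n : ℕ) (d : Fin n → ℝ) (e : Fin (n - 1) → ℝ) :
    Matrix (Fin n) (Fin n) ℝ :=
  Matrix.of fun i j =>
    if (i : ℕ) = (j : ℕ) then d i
    else if h : (i : ℕ) + 1 = (j : ℕ) then e ⟨i, by have := j.isLt; omega⟩
    else if h' : (j : ℕ) + 1 = (i : ℕ) then e ⟨j, by have := i.isLt; omega⟩
    else 0

instance matrixMeasurableSpace {n : ℕ} : MeasurableSpace (Matrix (Fin n) (Fin n) ℝ) :=
  inferInstanceAs (MeasurableSpace (Fin n → Fin n → ℝ))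

/-- The law of the Dumitriu–Edelman tridiagonal model `A_{n,β}`: independent `N(0,2)`
diagonal entries and independent `χ_{(n-i)β}` superdiagonal entries. -/
noncomputable def DEmeasure (n : ℕ) (β : ℝ) : Measure (Matrix (Fin n) (Fin n) ℝ) :=
  ((Measure.pi fun _ : Fin n => gaussianReal 0 2).prod
      (Measure.pi fun i : Fin (n - 1) => chiDist (((n - 1 - (i : ℕ) : ℕ) : ℝ) * β))).map
    fun p => triDiagOf n p.1 p.2

/-- The sign matrix `diag((-1)^i)`. -/
noncomputable def signD (n : ℕ) : Matrix (Fin n) (Fin n) ℝ :=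
  Matrix.diagonal fun i => (-1 : ℝ) ^ (i : ℕ)

lemma signD_mul_self (n : ℕ) : signD n * signD n = 1 := by
  rw [signD, Matrix.diagonal_mul_diagonal]
  have : ∀ i : Fin n, (-1 : ℝ) ^ (i : ℕ) * (-1 : ℝ) ^ (i : ℕ) = 1 := by
    intro i; rw [← mul_pow]; norm_num
  simp only [this]
  exact Matrix.diagonal_one

lemma triDiagOf_neg (n : ℕ) (d : Fin n → ℝ) (e : Fin (n - 1) → ℝ) :
    triDiagOf n (-d) e = -(signD n * triDiagOf n d e * signD n) := by
  have key : ∀ k : ℕ, (-1 : ℝ) ^ k * (-1 : ℝ) ^ k = 1 := by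
    intro k; rw [← mul_pow]; norm_num
  ext i j
  simp only [triDiagOf, signD, Matrix.neg_apply, Matrix.mul_diagonal, Matrix.diagonal_mul,
    Matrix.of_apply, Pi.neg_apply]
  split_ifs with h1 h2 h3
  · have : (i : ℕ) = (j : ℕ) := h1
    rw [show (j : ℕ) = (i : ℕ) from this.symm]
    linear_combination (d i) * key (i : ℕ)
  · have : (j : ℕ) = (i : ℕ) + 1 := h2.symm
    rw [this, pow_succ]
    linear_combination (-(e ⟨(i : ℕ), by have := j.isLt; omega⟩)) * key (i : ℕ)
  · have : (i : ℕ) = (j : ℕ) + 1 := h3.symm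
    rw [this, pow_succ]
    linear_combination (-(e ⟨(j : ℕ), by have := i.isLt; omega⟩)) * key (j : ℕ)
  · ring

lemma signD_conj_pow (n : ℕ) (A : Matrix (Fin n) (Fin n) ℝ) (p : ℕ) :
    (signD n * A * signD n) ^ p = signD n * A ^ p * signD n := by
  induction p with
  | zero => simp [pow_zero, signD_mul_self]
  | succ p ih =>
    rw [pow_succ, ih, pow_succ]
    have h : signD n * A ^ p * signD n * (signD n * A * signD n)
        = signD n * A ^ p * (signD n * signD n) * A * signD n := by
      noncomm_ring
    rw [h, signD_mul_self, mul_one]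
    noncomm_ring

lemma trace_pow_neg (n : ℕ) (d : Fin n → ℝ) (e : Fin (n - 1) → ℝ) {p : ℕ} (hp : Odd p) :
    Matrix.trace ((triDiagOf n (-d) e) ^ p) = -Matrix.trace ((triDiagOf n d e) ^ p) := by
  rw [triDiagOf_neg, hp.neg_pow, signD_conj_pow, Matrix.trace_neg]
  congr 1
  rw [Matrix.trace_mul_comm, ← mul_assoc, signD_mul_self, one_mul]

lemma measurable_matrixPow (n p : ℕ) :
    Measurable fun M : Matrix (Fin n) (Fin n) ℝ => M ^ p := by
  induction p with
  | zero => simp only [pow_zero]; exact (measurable_const :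
      Measurable fun _ : Matrix (Fin n) (Fin n) ℝ => (1 : Matrix (Fin n) (Fin n) ℝ))
  | succ p ih =>
    refine measurable_pi_iff.mpr ?_; intro i
    refine measurable_pi_iff.mpr ?_; intro j
    have heq : (fun M : Matrix (Fin n) (Fin n) ℝ => (M ^ (p + 1)) i j)
        = fun M => ∑ k, (M ^ p) i k * M k j := by
      funext M; rw [pow_succ]; rfl
    rw [heq]
    refine Finset.measurable_sum _ fun k _ => Measurable.mul ?_ ?_
    · exact (measurable_pi_apply k).comp ((measurable_pi_apply i).comp ih)
    · exact (measurable_pi_apply j).comp (measurable_pi_apply k)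

lemma measurable_tracePow (n p : ℕ) :
    Measurable fun M : Matrix (Fin n) (Fin n) ℝ => Matrix.trace (M ^ p) := by
  have : (fun M : Matrix (Fin n) (Fin n) ℝ => Matrix.trace (M ^ p))
      = fun M => ∑ i, (M ^ p) i i := by
    funext M; rfl
  rw [this]
  exact Finset.measurable_sum _ fun i _ =>
    (measurable_pi_apply i).comp ((measurable_pi_apply i).comp (measurable_matrixPow n p))

lemma measurable_triDiagOf (n : ℕ) :
    Measurable fun q : (Fin n → ℝ) × (Fin (n - 1) → ℝ) => triDiagOf n q.1 q.2 := by
  refine measurable_pi_iff.mpr ?_; intro i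
  refine measurable_pi_iff.mpr ?_; intro j
  simp only [triDiagOf, Matrix.of_apply]
  split_ifs
  · exact (measurable_pi_apply i).comp measurable_fst
  · exact (measurable_pi_apply _).comp measurable_snd
  · exact (measurable_pi_apply _).comp measurable_snd
  · exact measurable_const

lemma gauss_neg_preserving :
    MeasurePreserving (fun x : ℝ => -x) (gaussianReal 0 2) (gaussianReal 0 2) := by
  refine ⟨measurable_neg, ?_⟩
  have h := gaussianReal_map_const_mul (μ := 0) (v := 2) (-1)
  have heq : (fun x : ℝ => -1 * x) = fun x : ℝ => -x := by funext x; ring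
  rw [heq] at h
  rw [h]
  norm_num

/-- The odd moments of the Dumitriu–Edelman tridiagonal model vanish. -/
theorem odd_trace_moments_vanish
    (β : ℝ) (hβ : 1 ≤ β) (n : ℕ) (p : ℕ) (hp : Odd p) :
    ∫ M, Matrix.trace (M ^ p) ∂DEmeasure n β = 0 := by
  set μ1 : Measure (Fin n → ℝ) := Measure.pi fun _ : Fin n => gaussianReal 0 2 with hμ1
  set μ2 : Measure (Fin (n - 1) → ℝ) :=
    Measure.pi fun i : Fin (n - 1) => chiDist (((n - 1 - (i : ℕ) : ℕ) : ℝ) * β) with hμ2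
  haveI hchi : ∀ i : Fin (n - 1),
      IsProbabilityMeasure (chiDist (((n - 1 - (i : ℕ) : ℕ) : ℝ) * β)) := by
    intro i
    have hpos : 0 < ((n - 1 - (i : ℕ) : ℕ) : ℝ) * β := by
      have h1 : 1 ≤ n - 1 - (i : ℕ) := by have := i.isLt; omega
      have : (1 : ℝ) ≤ ((n - 1 - (i : ℕ) : ℕ) : ℝ) := by exact_mod_cast h1
      nlinarith
    have : IsProbabilityMeasure (gammaMeasure ((((n - 1 - (i : ℕ) : ℕ) : ℝ) * β) / 2) (1 / 2)) :=
      isProbabilityMeasure_gammaMeasure (by linarith) (by norm_num)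
    exact Measure.isProbabilityMeasure_map Real.continuous_sqrt.measurable.aemeasurable
  haveI : IsProbabilityMeasure μ2 := by rw [hμ2]; infer_instance
  set ν := μ1.prod μ2 with hν
  have hgpi : MeasurePreserving (fun d : Fin n → ℝ => -d) μ1 μ1 :=
    measurePreserving_pi (fun _ : Fin n => gaussianReal 0 2)
      (fun _ : Fin n => gaussianReal 0 2) (fun _ => gauss_neg_preserving)
  have hS : MeasurePreserving (Prod.map (fun d : Fin n → ℝ => -d) id) ν ν :=
    hgpi.prod (MeasurePreserving.id μ2)
  have hT := measurable_triDiagOf n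
  have hf := measurable_tracePow n p
  have h1 : ∫ M, Matrix.trace (M ^ p) ∂DEmeasure n β
      = ∫ q : (Fin n → ℝ) × (Fin (n - 1) → ℝ),
          Matrix.trace ((triDiagOf n q.1 q.2) ^ p) ∂ν := by
    rw [DEmeasure]
    exact integral_map hT.aemeasurable hf.aestronglyMeasurable
  have h2 := integral_map (μ := ν) hS.measurable.aemeasurable
    ((hf.comp hT).aestronglyMeasurable)
  rw [hS.map_eq] at h2
  simp only [Function.comp, Prod.map, id] at h2
  have h3 : ∫ q : (Fin n → ℝ) × (Fin (n - 1) → ℝ),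
        Matrix.trace ((triDiagOf n (-q.1) q.2) ^ p) ∂ν
      = -∫ q : (Fin n → ℝ) × (Fin (n - 1) → ℝ),
          Matrix.trace ((triDiagOf n q.1 q.2) ^ p) ∂ν := by
    rw [← integral_neg]
    congr 1
    funext q
    exact trace_pow_neg n q.1 q.2 hp
  rw [h1]
  have h4 : ∫ q : (Fin n → ℝ) × (Fin (n - 1) → ℝ),
        Matrix.trace ((triDiagOf n q.1 q.2) ^ p) ∂ν
      = ∫ q : (Fin n → ℝ) × (Fin (n - 1) → ℝ),
          Matrix.trace ((triDiagOf n (-q.1) q.2) ^ p) ∂ν := h2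
  linarith [h4.trans h3]
end

section
/- Let ε > 0. There exist constants C > 0 and c > 0, depending only on ε, such that for every natural number k ≥ 1 and every integer i, the number of sequences s : {1, …, 2k} → {−1, +1} whose partial sums S_l = s_1 + ⋯ + s_l satisfy #{l ∈ {0, …, 2k} : S_l = i} ≥ k^{1/2+ε} is at most C·exp(−c·k^{2ε})·2^{2k}. (Equivalently: for a simple symmetric random walk of 2k steps, the probability that the occupation time of level i exceeds k^{1/2+ε} is at most C·exp(−c·k^{2ε}).) -/
open MeasureTheory ProbabilityTheory Filter Finset

/-- Partial sum of the first `l` steps of a walk `s`. -/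
def psum {m : ℕ} (s : Fin m → ℤ) (l : ℕ) : ℤ :=
  ∑ j ∈ Finset.univ.filter (fun j : Fin m => (j : ℕ) < l), s j

open Finset
open scoped Classical

/-- Finset of ±1 lists of length n. -/
def signsF (n : ℕ) : Finset (List ℤ) :=
  (Finset.univ : Finset (Fin n → Bool)).image
    (fun f => List.ofFn (fun j => if f j then (1:ℤ) else -1))

lemma mem_signsF {n : ℕ} {l : List ℤ} :
    l ∈ signsF n ↔ l.length = n ∧ ∀ x ∈ l, x = 1 ∨ x = -1 := by
  constructor
  · rintro h
    simp only [signsF, Finset.mem_image] at h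
    obtain ⟨f, -, rfl⟩ := h
    refine ⟨by simp, ?_⟩
    intro x hx
    rw [List.mem_ofFn] at hx
    obtain ⟨j, rfl⟩ := hx
    by_cases hf : f j <;> simp [hf]
  · rintro ⟨hl, hpm⟩
    simp only [signsF, Finset.mem_image]
    refine ⟨fun j => decide (l.get (j.cast hl.symm) = 1), Finset.mem_univ _, ?_⟩
    apply List.ext_get (by simp [hl])
    intro i h1 h2
    simp only [List.get_ofFn, List.get_eq_getElem]
    rcases hpm l[i] (List.getElem_mem h2) with h | h
    · simp [Fin.cast, h]
    · simp [Fin.cast, h]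

lemma card_signsF (n : ℕ) : (signsF n).card = 2 ^ n := by
  rw [signsF, Finset.card_image_of_injective _ ?_, Finset.card_univ]
  · simp
  · intro f g hfg
    have := List.ofFn_injective hfg
    funext j
    have h2 := congrFun this j
    by_cases hf : f j <;> by_cases hg : g j <;> simp_all

/-- number of times the walk `s` is at level `i` (times `0..s.length`). -/
def vcount (i : ℤ) (s : List ℤ) : ℕ :=
  ((Finset.range (s.length + 1)).filter fun l => (s.take l).sum = i).card

def zeF (g : ℕ) : Finset (List ℤ) := (signsF g).filter fun s => s.sum = 0

noncomputable def frF (g : ℕ) : Finset (List ℤ) :=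
  (signsF g).filter fun s => s.sum = 0 ∧ ∀ l, 0 < l → l < g → (s.take l).sum ≠ 0

def AF (r m : ℕ) : Finset (List ℤ) := (signsF m).filter fun s => r ≤ vcount 0 s

def BF (i : ℤ) (r m : ℕ) : Finset (List ℤ) := (signsF m).filter fun s => r ≤ vcount i s
section Part2
open Finset

lemma take_sub_sum (s : List ℤ) (l₀ l : ℕ) (h : l₀ ≤ l) :
    (s.take l).sum = (s.take l₀).sum + ((s.drop l₀).take (l - l₀)).sum := by
  have h2 : l = l₀ + (l - l₀) := by omega
  conv_lhs => rw [h2]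
  rw [List.take_add, List.sum_append]

lemma le_vcount_drop (s : List ℤ) (i : ℤ) (l₀ : ℕ) (hl₀ : l₀ ≤ s.length)
    (hsum : (s.take l₀).sum = i) :
    ((Finset.Icc l₀ s.length).filter fun l => (s.take l).sum = i).card
      ≤ vcount 0 (s.drop l₀) := by
  unfold vcount
  apply Finset.card_le_card_of_injOn (fun l => l - l₀)
  · intro l hl
    simp only [Finset.mem_coe, Finset.mem_filter, Finset.mem_Icc] at hl
    simp only [Finset.mem_coe, Finset.mem_filter, Finset.mem_range, List.length_drop]
    refine ⟨by omega, ?_⟩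
    have := take_sub_sum s l₀ l hl.1.1
    rw [hl.2, hsum] at this
    omega
  · intro a ha b hb hab
    simp only [Finset.coe_filter, Set.mem_setOf_eq, Finset.mem_Icc] at ha hb
    dsimp at hab
    omega

lemma signs_take {s : List ℤ} {n l : ℕ} (hs : s ∈ signsF n) (hl : l ≤ n) :
    s.take l ∈ signsF l := by
  rw [mem_signsF] at hs ⊢
  refine ⟨by rw [List.length_take, hs.1]; omega,
    fun x hx => hs.2 x (List.take_subset _ _ hx)⟩

lemma signs_drop {s : List ℤ} {n l : ℕ} (hs : s ∈ signsF n) :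
    s.drop l ∈ signsF (n - l) := by
  rw [mem_signsF] at hs ⊢
  exact ⟨by rw [List.length_drop, hs.1], fun x hx => hs.2 x (List.drop_subset _ _ hx)⟩

lemma B_card_le (i : ℤ) (r m : ℕ) (hr : 1 ≤ r) :
    (BF i r m).card ≤ ∑ l ∈ Finset.range (m+1), 2^l * (AF r (m-l)).card := by
  have hsub : BF i r m ⊆ (Finset.range (m+1)).biUnion
      (fun l => ((signsF l) ×ˢ (AF r (m-l))).image fun p : List ℤ × List ℤ => p.1 ++ p.2) := by
    intro s hs
    simp only [BF, Finset.mem_filter] at hs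
    obtain ⟨hsig, hv⟩ := hs
    have hlen : s.length = m := (mem_signsF.1 hsig).1
    set V := (Finset.range (s.length + 1)).filter (fun l => (s.take l).sum = i) with hV
    have hVne : V.Nonempty := by
      rw [← Finset.card_pos]
      exact lt_of_lt_of_le hr hv
    set l₀ := V.min' hVne with hl₀def
    have hl₀V : l₀ ∈ V := V.min'_mem hVne
    have hl₀le : l₀ ≤ m := by
      simp only [hV, Finset.mem_filter, Finset.mem_range] at hl₀V; omega
    have hl₀sum : (s.take l₀).sum = i := by
      simp only [hV, Finset.mem_filter] at hl₀V; exact hl₀V.2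
    rw [Finset.mem_biUnion]
    refine ⟨l₀, by simp only [Finset.mem_range]; omega, ?_⟩
    rw [Finset.mem_image]
    refine ⟨(s.take l₀, s.drop l₀), ?_, by simp⟩
    rw [Finset.mem_product]
    refine ⟨signs_take hsig hl₀le, ?_⟩
    simp only [AF, Finset.mem_filter]
    refine ⟨signs_drop hsig, ?_⟩
    refine le_trans ?_ (le_vcount_drop s i l₀ (by omega) hl₀sum)
    refine le_trans hv (Finset.card_le_card ?_)
    intro l hl
    simp only [hV, Finset.mem_filter, Finset.mem_range] at hl
    simp only [Finset.mem_filter, Finset.mem_Icc]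
    exact ⟨⟨V.min'_le l (by simp [hV, Finset.mem_filter, Finset.mem_range]; exact ⟨by omega, hl.2⟩), by omega⟩, hl.2⟩
  calc (BF i r m).card ≤ _ := Finset.card_le_card hsub
    _ ≤ ∑ l ∈ Finset.range (m+1),
        (((signsF l) ×ˢ (AF r (m-l))).image fun p : List ℤ × List ℤ => p.1 ++ p.2).card :=
      Finset.card_biUnion_le
    _ ≤ ∑ l ∈ Finset.range (m+1), 2^l * (AF r (m-l)).card := by
      apply Finset.sum_le_sum
      intro l _
      calc _ ≤ ((signsF l) ×ˢ (AF r (m-l))).card := Finset.card_image_le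
        _ = 2^l * (AF r (m-l)).card := by rw [Finset.card_product, card_signsF]

lemma A_card_le (r m : ℕ) (hr : 1 ≤ r) :
    (AF (r+1) m).card ≤ ∑ g ∈ Finset.Icc 1 m, (frF g).card * (AF r (m-g)).card := by
  have hsub : AF (r+1) m ⊆ (Finset.Icc 1 m).biUnion
      (fun g => ((frF g) ×ˢ (AF r (m-g))).image fun p : List ℤ × List ℤ => p.1 ++ p.2) := by
    intro s hs
    simp only [AF, Finset.mem_filter] at hs
    obtain ⟨hsig, hv⟩ := hs
    have hlen : s.length = m := (mem_signsF.1 hsig).1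
    set V := (Finset.range (s.length + 1)).filter (fun l => (s.take l).sum = 0) with hV
    have h0V : 0 ∈ V := by simp [hV]
    set W := V.erase 0 with hW
    have hWcard : r ≤ W.card := by
      have : V.card ≤ W.card + 1 := by
        rw [hW, Finset.card_erase_of_mem h0V]
        omega
      have hvc : r + 1 ≤ V.card := hv
      omega
    have hWne : W.Nonempty := by rw [← Finset.card_pos]; omega
    set g := W.min' hWne with hgdef
    have hgW : g ∈ W := W.min'_mem hWne
    have hgV : g ∈ V := Finset.mem_of_mem_erase hgW
    have hg0 : g ≠ 0 := Finset.ne_of_mem_erase hgW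
    have hgle : g ≤ m := by
      simp only [hV, Finset.mem_filter, Finset.mem_range] at hgV; omega
    have hgsum : (s.take g).sum = 0 := by
      simp only [hV, Finset.mem_filter] at hgV; exact hgV.2
    rw [Finset.mem_biUnion]
    refine ⟨g, by simp only [Finset.mem_Icc]; omega, ?_⟩
    rw [Finset.mem_image]
    refine ⟨(s.take g, s.drop g), ?_, by simp⟩
    rw [Finset.mem_product]
    constructor
    · -- first return
      simp only [frF, Finset.mem_filter]
      refine ⟨signs_take hsig hgle, ?_, ?_⟩
      · rw [← List.take_length (l := s.take g)]
        simp only [List.length_take]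
        rw [List.take_take]
        have : min (min g s.length) g = g := by omega
        rw [this]
        exact hgsum
      · intro l hl0 hlg hcon
        rw [List.take_take] at hcon
        have hmin : min l g = l := by omega
        rw [hmin] at hcon
        have hlV : l ∈ V := by
          simp only [hV, Finset.mem_filter, Finset.mem_range]
          exact ⟨by omega, hcon⟩
        have : g ≤ l := W.min'_le l (Finset.mem_erase.2 ⟨by omega, hlV⟩)
        omega
    · simp only [AF, Finset.mem_filter]
      refine ⟨signs_drop hsig, ?_⟩
      refine le_trans ?_ (le_vcount_drop s 0 g (by omega) hgsum)
      refine le_trans hWcard (Finset.card_le_card ?_)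
      intro l hl
      have hlV : l ∈ V := Finset.mem_of_mem_erase hl
      simp only [hV, Finset.mem_filter, Finset.mem_range] at hlV
      simp only [Finset.mem_filter, Finset.mem_Icc]
      exact ⟨⟨W.min'_le l hl, by omega⟩, hlV.2⟩
  calc (AF (r+1) m).card ≤ _ := Finset.card_le_card hsub
    _ ≤ ∑ g ∈ Finset.Icc 1 m,
        (((frF g) ×ˢ (AF r (m-g))).image fun p : List ℤ × List ℤ => p.1 ++ p.2).card :=
      Finset.card_biUnion_le
    _ ≤ ∑ g ∈ Finset.Icc 1 m, (frF g).card * (AF r (m-g)).card := by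
      apply Finset.sum_le_sum
      intro g _
      calc _ ≤ ((frF g) ×ˢ (AF r (m-g))).card := Finset.card_image_le
        _ = (frF g).card * (AF r (m-g)).card := Finset.card_product _ _

end Part2
section Part3
open Finset

lemma frF_len {g : ℕ} {t : List ℤ} (ht : t ∈ frF g) : t.length = g :=
  (mem_signsF.1 (Finset.mem_of_mem_filter _ ht)).1

lemma zeF_len {g : ℕ} {t : List ℤ} (ht : t ∈ zeF g) : t.length = g :=
  (mem_signsF.1 (Finset.mem_of_mem_filter _ ht)).1

lemma renewal_ge (g : ℕ) :
    ∑ h ∈ Finset.Icc 1 g, (frF h).card * (zeF (g-h)).card ≤ (zeF g).card := by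
  set U := (Finset.Icc 1 g).biUnion
    (fun h => ((frF h) ×ˢ (zeF (g-h))).image fun p : List ℤ × List ℤ => p.1 ++ p.2) with hU
  have hsub : U ⊆ zeF g := by
    intro s hs
    simp only [hU, Finset.mem_biUnion, Finset.mem_image, Finset.mem_Icc] at hs
    obtain ⟨h, ⟨hh1, hhg⟩, ⟨t, u⟩, htu, rfl⟩ := hs
    rw [Finset.mem_product] at htu
    obtain ⟨ht, hu⟩ := htu
    have htl := frF_len ht
    have hul := zeF_len hu
    simp only [frF, zeF, Finset.mem_filter, mem_signsF] at ht hu ⊢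
    refine ⟨⟨?_, ?_⟩, ?_⟩
    · rw [List.length_append, htl, hul]; omega
    · intro x hx
      rcases List.mem_append.1 hx with h' | h'
      exacts [ht.1.2 x h', hu.1.2 x h']
    · rw [List.sum_append, ht.2.1, hu.2]; ring
  have hdisj : ∀ h₁ ∈ Finset.Icc 1 g, ∀ h₂ ∈ Finset.Icc 1 g, h₁ ≠ h₂ →
      Disjoint (((frF h₁) ×ˢ (zeF (g-h₁))).image fun p : List ℤ × List ℤ => p.1 ++ p.2)
        (((frF h₂) ×ˢ (zeF (g-h₂))).image fun p : List ℤ × List ℤ => p.1 ++ p.2) := by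
    have key : ∀ h₁ h₂ : ℕ, 0 < h₁ → h₁ < h₂ → ∀ s : List ℤ,
        s ∈ (((frF h₁) ×ˢ (zeF (g-h₁))).image fun p : List ℤ × List ℤ => p.1 ++ p.2) →
        s ∈ (((frF h₂) ×ˢ (zeF (g-h₂))).image fun p : List ℤ × List ℤ => p.1 ++ p.2) → False := by
      intro h₁ h₂ h1pos hlt s hs1 hs2
      simp only [Finset.mem_image] at hs1 hs2
      obtain ⟨⟨t₁, u₁⟩, htu1, heq1⟩ := hs1
      obtain ⟨⟨t₂, u₂⟩, htu2, heq2⟩ := hs2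
      rw [Finset.mem_product] at htu1 htu2
      have ht1 := htu1.1; have ht2 := htu2.1
      have hl1 := frF_len ht1; have hl2 := frF_len ht2
      -- (s.take h₁).sum = t₁.sum = 0
      have e1 : (s.take h₁).sum = 0 := by
        rw [← heq1, ← hl1, List.take_left]
        simp only [frF, Finset.mem_filter] at ht1
        exact ht1.2.1
      have e2 : (s.take h₁).sum ≠ 0 := by
        rw [← heq2]
        rw [List.take_append_of_le_length (by omega)]
        simp only [frF, Finset.mem_filter] at ht2
        have := ht2.2.2 h₁ h1pos (by omega)
        exact this
      exact e2 e1
    intro h₁ hh₁ h₂ hh₂ hne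
    rw [Finset.disjoint_left]
    intro s hs1 hs2
    rcases lt_or_gt_of_ne hne with h | h
    · exact key h₁ h₂ (by simp only [Finset.mem_Icc] at hh₁; omega) h s hs1 hs2
    · exact key h₂ h₁ (by simp only [Finset.mem_Icc] at hh₂; omega) h s hs2 hs1
  have hinj : ∀ h ∈ Finset.Icc 1 g,
      (((frF h) ×ˢ (zeF (g-h))).image fun p : List ℤ × List ℤ => p.1 ++ p.2).card
        = (frF h).card * (zeF (g-h)).card := by
    intro h _
    rw [Finset.card_image_of_injOn, Finset.card_product]
    rintro ⟨t, u⟩ htu ⟨t', u'⟩ htu' heq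
    simp only [Finset.mem_coe, Finset.mem_product] at htu htu'
    dsimp at heq
    have := List.append_inj heq (by rw [frF_len htu.1, frF_len htu'.1])
    simp [Prod.ext_iff]
    exact ⟨this.1, this.2⟩
  calc ∑ h ∈ Finset.Icc 1 g, (frF h).card * (zeF (g-h)).card
      = ∑ h ∈ Finset.Icc 1 g,
        (((frF h) ×ˢ (zeF (g-h))).image fun p : List ℤ × List ℤ => p.1 ++ p.2).card := by
        apply Finset.sum_congr rfl
        intro h hh
        exact (hinj h hh).symm
    _ = U.card := (Finset.card_biUnion hdisj).symm
    _ ≤ (zeF g).card := Finset.card_le_card hsub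

end Part3
section Part4
open Finset

lemma count_one_aux (s : List ℤ) (h : ∀ x ∈ s, x = 1 ∨ x = -1) :
    2 * (s.count 1 : ℤ) = s.length + s.sum := by
  induction s with
  | nil => simp
  | cons x t ih =>
    have hx := h x (by simp)
    have ht := ih (fun y hy => h y (by simp [hy]))
    rcases hx with h1 | h1 <;> subst h1 <;>
      simp only [List.count_cons, List.sum_cons, List.length_cons, beq_iff_eq] <;>
      push_cast <;> omega

lemma card_filter_getD (s : List ℤ) :
    ((Finset.range s.length).filter fun j => s.getD j 0 = 1).card = s.count 1 := by
  induction s with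
  | nil => simp
  | cons x t ih =>
    rw [Finset.card_filter, List.length_cons, Finset.sum_range_succ']
    simp only [List.getD_cons_succ, List.getD_cons_zero]
    rw [← Finset.card_filter, ih, List.count_cons]
    simp [beq_iff_eq, add_comm]

lemma zeF_even {g : ℕ} {s : List ℤ} (hs : s ∈ zeF g) : g % 2 = 0 := by
  simp only [zeF, Finset.mem_filter, mem_signsF] at hs
  have := count_one_aux s hs.1.2
  rw [hs.2, hs.1.1] at this
  omega

lemma zeF_card_le (a : ℕ) : (zeF (2*a)).card ≤ Nat.centralBinom a := by
  have hmaps : ∀ s ∈ zeF (2*a),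
      (Finset.range (2*a)).filter (fun j => s.getD j 0 = 1)
        ∈ Finset.powersetCard a (Finset.range (2*a)) := by
    intro s hs
    simp only [zeF, Finset.mem_filter, mem_signsF] at hs
    rw [Finset.mem_powersetCard]
    refine ⟨Finset.filter_subset _ _, ?_⟩
    have h1 : ((Finset.range s.length).filter fun j => s.getD j 0 = 1).card = s.count 1 :=
      card_filter_getD s
    have h2 := count_one_aux s hs.1.2
    rw [hs.2] at h2
    rw [← hs.1.1, h1]
    omega
  have hinj : Set.InjOn (fun s : List ℤ => (Finset.range (2*a)).filter (fun j => s.getD j 0 = 1))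
      (zeF (2*a)) := by
    intro s hs s' hs' heq
    simp only [zeF, Finset.mem_filter, mem_signsF, Finset.mem_coe] at hs hs'
    dsimp at heq
    apply List.ext_getElem (by rw [hs.1.1, hs'.1.1])
    intro j hj hj'
    have hjr : j ∈ Finset.range (2*a) := by rw [Finset.mem_range, ← hs.1.1]; exact hj
    have hd : s.getD j 0 = s[j] := List.getD_eq_getElem s 0 hj
    have hd' : s'.getD j 0 = s'[j] := List.getD_eq_getElem s' 0 hj'
    have hiff : (s.getD j 0 = 1) ↔ (s'.getD j 0 = 1) := by
      constructor
      · intro h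
        have : j ∈ (Finset.range (2*a)).filter (fun j => s'.getD j 0 = 1) := by
          rw [← heq]; exact Finset.mem_filter.2 ⟨hjr, h⟩
        exact (Finset.mem_filter.1 this).2
      · intro h
        have : j ∈ (Finset.range (2*a)).filter (fun j => s.getD j 0 = 1) := by
          rw [heq]; exact Finset.mem_filter.2 ⟨hjr, h⟩
        exact (Finset.mem_filter.1 this).2
    rcases hs.1.2 s[j] (List.getElem_mem hj) with h1 | h1 <;>
      rcases hs'.1.2 s'[j] (List.getElem_mem hj') with h2 | h2 <;>
      rw [hd, hd'] at hiff <;> simp [h1, h2] at hiff ⊢ <;> omega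
  have := Finset.card_le_card_of_injOn _ hmaps hinj
  simpa [Nat.centralBinom, Finset.card_powersetCard, Finset.card_range] using this

lemma cb_sq (a : ℕ) : (Nat.centralBinom a)^2 * (2*a+1) ≤ 16^a := by
  induction a with
  | zero => simp [Nat.centralBinom]
  | succ n ih =>
    have key := Nat.succ_mul_centralBinom_succ n
    have main : (n+1)^2 * ((Nat.centralBinom (n+1))^2 * (2*(n+1)+1))
        ≤ (n+1)^2 * 16^(n+1) := by
      calc (n+1)^2 * ((Nat.centralBinom (n+1))^2 * (2*(n+1)+1))
          = ((n+1) * Nat.centralBinom (n+1))^2 * (2*n+3) := by ring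
        _ = (2*(2*n+1)*Nat.centralBinom n)^2 * (2*n+3) := by rw [key]
        _ = (4*((2*n+1)*(2*n+3))) * ((Nat.centralBinom n)^2*(2*n+1)) := by ring
        _ ≤ (4*((2*n+1)*(2*n+3))) * 16^n := Nat.mul_le_mul_left _ ih
        _ ≤ (4*((2*n+2)*(2*n+2))) * 16^n := Nat.mul_le_mul_right _ (by nlinarith)
        _ = (n+1)^2 * 16^(n+1) := by ring
    exact Nat.le_of_mul_le_mul_left main (by positivity)

lemma zeF_real (g : ℕ) : ((zeF g).card : ℝ) ≤ 2^g / Real.sqrt (g+1) := by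
  rcases Nat.even_or_odd g with he | ho
  · obtain ⟨a, ha⟩ := he
    have hg : g = 2*a := by omega
    subst hg
    have hsq : (0:ℝ) < Real.sqrt (2*(a:ℝ)+1) := Real.sqrt_pos.2 (by positivity)
    have h1 : ((zeF (2*a)).card : ℝ) ≤ (Nat.centralBinom a : ℝ) := by
      exact_mod_cast zeF_card_le a
    have h2 : ((Nat.centralBinom a : ℝ))^2 * (2*(a:ℝ)+1) ≤ 16^a := by
      have h := cb_sq a
      have h' : (((Nat.centralBinom a)^2 * (2*a+1) : ℕ) : ℝ) ≤ ((16^a : ℕ) : ℝ) := by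
        exact_mod_cast h
      push_cast at h'
      linarith
    have h3 : (Nat.centralBinom a : ℝ) ≤ 2^(2*a) / Real.sqrt (2*(a:ℝ)+1) := by
      rw [le_div_iff₀ hsq]
      have hB : (0:ℝ) ≤ 2^(2*a) := by positivity
      have hcs : (0:ℝ) ≤ (Nat.centralBinom a : ℝ) * Real.sqrt (2*(a:ℝ)+1) := by positivity
      have h16 : (16:ℝ)^a = ((2:ℝ)^(2*a))^2 := by
        rw [show (16:ℝ) = 2^4 by norm_num, ← pow_mul, ← pow_mul]
        congr 1
        ring
      have hsqle : ((Nat.centralBinom a : ℝ) * Real.sqrt (2*(a:ℝ)+1))^2 ≤ ((2:ℝ)^(2*a))^2 := by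
        rw [mul_pow, Real.sq_sqrt (show (0:ℝ) ≤ 2*(a:ℝ)+1 by positivity), ← h16]
        exact h2
      calc (Nat.centralBinom a : ℝ) * Real.sqrt (2*(a:ℝ)+1)
          = Real.sqrt (((Nat.centralBinom a : ℝ) * Real.sqrt (2*(a:ℝ)+1))^2) :=
            (Real.sqrt_sq hcs).symm
        _ ≤ Real.sqrt (((2:ℝ)^(2*a))^2) := Real.sqrt_le_sqrt hsqle
        _ = 2^(2*a) := Real.sqrt_sq hB
    have hcast : ((2*a : ℕ) : ℝ) + 1 = 2*(a:ℝ)+1 := by push_cast; ring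
    calc ((zeF (2*a)).card : ℝ) ≤ (Nat.centralBinom a : ℝ) := h1
      _ ≤ 2^(2*a) / Real.sqrt (2*(a:ℝ)+1) := h3
      _ = 2^(2*a) / Real.sqrt (((2*a : ℕ) : ℝ)+1) := by rw [hcast]
  · have hemp : zeF g = ∅ := by
      apply Finset.eq_empty_of_forall_notMem
      intro s hs
      have h2 := zeF_even hs
      obtain ⟨b, hb⟩ := ho
      omega
    rw [hemp]
    simp only [Finset.card_empty, Nat.cast_zero]
    positivity

end Part4
section Part5
open Finset

lemma geom_sum_le' {y : ℝ} (hy0 : 0 ≤ y) (hy1 : y < 1) (M : ℕ) :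
    ∑ g ∈ Finset.range M, y^g ≤ 1/(1-y) := by
  have h1 : 0 < 1 - y := by linarith
  rw [le_div_iff₀ h1]
  have := geom_sum_mul y M
  nlinarith [pow_nonneg hy0 M]

lemma sum_mul_geom_le {y : ℝ} (hy0 : 0 ≤ y) (hy1 : y < 1) (M : ℕ) :
    ∑ g ∈ Finset.range M, (g:ℝ) * y^g ≤ y/(1-y)^2 := by
  have key : ∀ N : ℕ, (∑ g ∈ Finset.range N, (g:ℝ) * y^g) * (1-y)^2
      = y - N*y^N + ((N:ℝ)-1)*y^(N+1) := by
    intro N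
    induction N with
    | zero => simp
    | succ n ih =>
      rw [Finset.sum_range_succ, add_mul, ih]
      push_cast
      ring
  have h2 : (0:ℝ) < (1-y)^2 := by nlinarith
  rw [le_div_iff₀ h2, key M]
  have h3 : (0:ℝ) ≤ y^M := pow_nonneg hy0 M
  have hy' : y^(M+1) ≤ y^M := pow_le_pow_of_le_one hy0 hy1.le (by omega)
  have h4 : ((M:ℝ)-1)*y^(M+1) ≤ M*y^M := by
    rcases Nat.eq_zero_or_pos M with rfl | hM
    · simp
      positivity
    · have hM1 : (1:ℝ) ≤ (M:ℝ) := by exact_mod_cast hM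
      have hyp1 : (0:ℝ) ≤ y^(M+1) := pow_nonneg hy0 _
      calc ((M:ℝ)-1)*y^(M+1) ≤ (M:ℝ)*y^(M+1) :=
            mul_le_mul_of_nonneg_right (by linarith) hyp1
        _ ≤ (M:ℝ)*y^M := mul_le_mul_of_nonneg_left hy' (by linarith)
  linarith

lemma sqrt_lb (g : ℕ) (hg : 1 ≤ g) :
    1 / Real.sqrt g ≤ 2 * (Real.sqrt g - Real.sqrt ((g-1 : ℕ))) := by
  have hg1 : (1:ℝ) ≤ (g:ℝ) := by exact_mod_cast hg
  have h0 : (0:ℝ) < Real.sqrt g := Real.sqrt_pos.2 (by linarith)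
  have hcast : (((g-1:ℕ)):ℝ) = (g:ℝ) - 1 := by
    push_cast [hg]
    ring
  have ha2 : (Real.sqrt g)^2 = g := Real.sq_sqrt (by linarith)
  have hb2 : (Real.sqrt ((g-1:ℕ)))^2 = (g:ℝ) - 1 := by
    rw [hcast]
    exact Real.sq_sqrt (by linarith)
  have hble : Real.sqrt ((g-1:ℕ)) ≤ Real.sqrt g := by
    apply Real.sqrt_le_sqrt
    rw [hcast]
    linarith
  have hbnn : 0 ≤ Real.sqrt ((g-1:ℕ)) := Real.sqrt_nonneg _
  rw [div_le_iff₀ h0]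
  nlinarith [sq_nonneg (Real.sqrt g - Real.sqrt ((g-1:ℕ)))]

lemma abel_id {y : ℝ} (M : ℕ) :
    ∑ g ∈ Finset.Icc 1 M, (Real.sqrt g - Real.sqrt ((g-1 : ℕ))) * y^g
      = (1-y) * (∑ g ∈ Finset.Icc 1 M, Real.sqrt g * y^g) + Real.sqrt M * y^(M+1) := by
  induction M with
  | zero => simp
  | succ n ih =>
    rw [Finset.sum_Icc_succ_top (by omega), Finset.sum_Icc_succ_top (by omega), ih]
    have hn : ((n+1 : ℕ) - 1 : ℕ) = n := by omega
    rw [hn]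
    push_cast
    ring

lemma bernoulli_pow {y : ℝ} (hy0 : 0 < y) (hy1 : y < 1) (M : ℕ) :
    y^M * (1 + M*(1-y)) ≤ 1 := by
  have hxnn : (0:ℝ) ≤ (1-y)/y := div_nonneg (by linarith) hy0.le
  have h := one_add_mul_le_pow (a := (1-y)/y) (by linarith) M
  have h1y : 1 + (1-y)/y = 1/y := by field_simp; ring
  rw [h1y] at h
  have h2 : 1 + (M:ℝ)*(1-y) ≤ 1 + (M:ℝ)*((1-y)/y) := by
    have : (1-y) ≤ (1-y)/y := by
      rw [le_div_iff₀ hy0]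
      nlinarith
    have hMnn : (0:ℝ) ≤ (M:ℝ) := by positivity
    nlinarith
  have h3 : 1 + (M:ℝ)*(1-y) ≤ (1/y)^M := le_trans h2 h
  have h4 : y^M * (1/y)^M = 1 := by
    rw [← mul_pow]
    field_simp
    exact one_pow M
  calc y^M * (1 + (M:ℝ)*(1-y)) ≤ y^M * (1/y)^M :=
        mul_le_mul_of_nonneg_left h3 (by positivity)
    _ = 1 := h4

lemma sqrtM_pow {y : ℝ} (hy0 : 0 < y) (hy1 : y < 1) (M : ℕ) :
    Real.sqrt M * y^(M+1) ≤ 1/(2*Real.sqrt (1-y)) := by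
  have h1 : (0:ℝ) < 1 - y := by linarith
  have hs1 : (0:ℝ) < Real.sqrt (1-y) := Real.sqrt_pos.2 h1
  have hs12 : (Real.sqrt (1-y))^2 = 1-y := Real.sq_sqrt h1.le
  have hsM : (0:ℝ) ≤ Real.sqrt M := Real.sqrt_nonneg _
  have hsM2 : (Real.sqrt M)^2 = M := Real.sq_sqrt (by positivity)
  have hamgm : 2 * Real.sqrt M * Real.sqrt (1-y) ≤ 1 + M*(1-y) := by
    nlinarith [sq_nonneg (Real.sqrt M * Real.sqrt (1-y) - 1)]
  have hber := bernoulli_pow hy0 hy1 M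
  have hyM : (0:ℝ) ≤ y^M := by positivity
  rw [le_div_iff₀ (by positivity)]
  have key : Real.sqrt M * y^(M+1) * (2*Real.sqrt (1-y)) ≤ y^M * (1 + M*(1-y)) := by
    rw [pow_succ]
    calc Real.sqrt M * (y^M * y) * (2*Real.sqrt (1-y))
        = y^M * (y * (2 * Real.sqrt M * Real.sqrt (1-y))) := by ring
      _ ≤ y^M * (1 * (1 + M*(1-y))) := by
          apply mul_le_mul_of_nonneg_left ?_ hyM
          apply mul_le_mul hy1.le hamgm (by positivity) (by norm_num)
      _ = y^M * (1 + M*(1-y)) := by ring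
  linarith

lemma sqrt_geom_sum_le {y : ℝ} (hy0 : 0 < y) (hy1 : y < 1) (M : ℕ) :
    ∑ g ∈ Finset.Icc 1 M, y^g / Real.sqrt g ≤ 3 / Real.sqrt (1-y) := by
  have h1 : (0:ℝ) < 1 - y := by linarith
  have hs1 : (0:ℝ) < Real.sqrt (1-y) := Real.sqrt_pos.2 h1
  set T := ∑ g ∈ Finset.Icc 1 M, Real.sqrt g * y^g with hT
  have step1 : ∑ g ∈ Finset.Icc 1 M, y^g / Real.sqrt g
      ≤ 2 * ((1-y) * T + Real.sqrt M * y^(M+1)) := by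
    rw [hT, ← abel_id, Finset.mul_sum]
    apply Finset.sum_le_sum
    intro g hg
    simp only [Finset.mem_Icc] at hg
    have hlb := sqrt_lb g hg.1
    have hyg : (0:ℝ) ≤ y^g := by positivity
    calc y^g / Real.sqrt g = (1/Real.sqrt g) * y^g := by ring
      _ ≤ (2 * (Real.sqrt g - Real.sqrt ((g-1:ℕ)))) * y^g :=
          mul_le_mul_of_nonneg_right hlb hyg
      _ = 2 * ((Real.sqrt g - Real.sqrt ((g-1:ℕ))) * y^g) := by ring
  have hTle : T ≤ (y+1)/(1-y)/(2*Real.sqrt (1-y)) := by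
    have hpt : ∀ g ∈ Finset.Icc 1 M, Real.sqrt g * y^g
        ≤ (1/(2*Real.sqrt (1-y))) * (((g:ℝ)*(1-y) + 1) * y^g) := by
      intro g _
      have hyg : (0:ℝ) ≤ y^g := by positivity
      have hsg2 : (Real.sqrt g)^2 = g := Real.sq_sqrt (by positivity)
      have hs12 : (Real.sqrt (1-y))^2 = 1-y := Real.sq_sqrt h1.le
      have hamgm : 2 * Real.sqrt g * Real.sqrt (1-y) ≤ (g:ℝ)*(1-y) + 1 := by
        nlinarith [sq_nonneg (Real.sqrt g * Real.sqrt (1-y) - 1)]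
      rw [div_mul_eq_mul_div, one_mul, le_div_iff₀ (by positivity)]
      calc Real.sqrt g * y^g * (2*Real.sqrt (1-y))
          = (2 * Real.sqrt g * Real.sqrt (1-y)) * y^g := by ring
        _ ≤ ((g:ℝ)*(1-y) + 1) * y^g := mul_le_mul_of_nonneg_right hamgm hyg
    have hsub : Finset.Icc 1 M ⊆ Finset.range (M+1) := by
      intro g hg
      simp only [Finset.mem_Icc] at hg
      simp only [Finset.mem_range]
      omega
    have e2 : ∑ g ∈ Finset.Icc 1 M, (g:ℝ)*y^g ≤ y/(1-y)^2 := by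
      refine le_trans (Finset.sum_le_sum_of_subset_of_nonneg hsub ?_) ?_
      · intro g _ _; positivity
      · exact sum_mul_geom_le hy0.le hy1 (M+1)
    have e3 : ∑ g ∈ Finset.Icc 1 M, y^g ≤ 1/(1-y) := by
      refine le_trans (Finset.sum_le_sum_of_subset_of_nonneg hsub ?_) ?_
      · intro g _ _; positivity
      · exact geom_sum_le' hy0.le hy1 (M+1)
    calc T ≤ ∑ g ∈ Finset.Icc 1 M, (1/(2*Real.sqrt (1-y))) * (((g:ℝ)*(1-y) + 1) * y^g) :=
          Finset.sum_le_sum hpt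
      _ = (1/(2*Real.sqrt (1-y))) * ∑ g ∈ Finset.Icc 1 M, (((g:ℝ)*(1-y) + 1) * y^g) := by
          rw [Finset.mul_sum]
      _ ≤ (1/(2*Real.sqrt (1-y))) * ((1-y) * (y/(1-y)^2) + 1/(1-y)) := by
          apply mul_le_mul_of_nonneg_left ?_ (by positivity)
          have e1 : ∑ g ∈ Finset.Icc 1 M, (((g:ℝ)*(1-y) + 1) * y^g)
              = (1-y) * (∑ g ∈ Finset.Icc 1 M, (g:ℝ)*y^g) + ∑ g ∈ Finset.Icc 1 M, y^g := by
            rw [Finset.mul_sum, ← Finset.sum_add_distrib]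
            apply Finset.sum_congr rfl
            intro g _
            ring
          rw [e1]
          exact add_le_add (mul_le_mul_of_nonneg_left e2 h1.le) e3
      _ = (y+1)/(1-y)/(2*Real.sqrt (1-y)) := by
          field_simp
  have hMp := sqrtM_pow hy0 hy1 M
  have hstep2 : (1-y) * T ≤ (y+1)/(2*Real.sqrt (1-y)) := by
    calc (1-y) * T ≤ (1-y) * ((y+1)/(1-y)/(2*Real.sqrt (1-y))) :=
          mul_le_mul_of_nonneg_left hTle h1.le
      _ = (y+1)/(2*Real.sqrt (1-y)) := by
          field_simp
  calc ∑ g ∈ Finset.Icc 1 M, y^g / Real.sqrt g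
      ≤ 2 * ((1-y) * T + Real.sqrt M * y^(M+1)) := step1
    _ ≤ 2 * ((y+1)/(2*Real.sqrt (1-y)) + 1/(2*Real.sqrt (1-y))) := by
        have := add_le_add hstep2 hMp
        linarith
    _ = (y+2)/Real.sqrt (1-y) := by
        field_simp
        ring
    _ ≤ 3/Real.sqrt (1-y) := by
        gcongr
        linarith

end Part5
section Part6
open Finset

lemma signsF_zero : signsF 0 = {([] : List ℤ)} := by
  ext l
  simp only [mem_signsF, Finset.mem_singleton, List.length_eq_zero_iff]
  constructor
  · rintro ⟨rfl, -⟩; rfl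
  · rintro rfl; exact ⟨rfl, by simp⟩

lemma zeF_zero_card : (zeF 0).card = 1 := by
  rw [zeF, signsF_zero]
  rw [Finset.filter_singleton]
  simp

lemma zeF_le_pow (g : ℕ) : (zeF g).card ≤ 2^g := by
  calc (zeF g).card ≤ (signsF g).card := Finset.card_le_card (Finset.filter_subset _ _)
    _ = 2^g := card_signsF g

noncomputable def Pv (y : ℝ) (M : ℕ) : ℝ :=
  ∑ g ∈ Finset.range (M+1), ((zeF g).card : ℝ)/2^g * y^g

noncomputable def Qv (y : ℝ) (m : ℕ) : ℝ :=
  ∑ g ∈ Finset.Icc 1 m, ((frF g).card : ℝ)/2^g * y^g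

lemma range_split (M : ℕ) : Finset.range (M+1) = insert 0 (Finset.Icc 1 M) := by
  ext x
  simp only [Finset.mem_range, Finset.mem_insert, Finset.mem_Icc]
  omega

lemma Pv_eq (y : ℝ) (M : ℕ) :
    Pv y M = 1 + ∑ g ∈ Finset.Icc 1 M, ((zeF g).card : ℝ)/2^g * y^g := by
  rw [Pv, range_split, Finset.sum_insert (by simp)]
  simp [zeF_zero_card]

lemma Pv_ge_one {y : ℝ} (hy0 : 0 ≤ y) (M : ℕ) : 1 ≤ Pv y M := by
  rw [Pv_eq]
  have : 0 ≤ ∑ g ∈ Finset.Icc 1 M, ((zeF g).card : ℝ)/2^g * y^g := by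
    apply Finset.sum_nonneg
    intro g _
    positivity
  linarith

lemma Pv_le {y : ℝ} (hy0 : 0 < y) (hy1 : y < 1) (M : ℕ) :
    Pv y M ≤ 4 / Real.sqrt (1-y) := by
  have h1 : (0:ℝ) < 1 - y := by linarith
  have hs1 : (0:ℝ) < Real.sqrt (1-y) := Real.sqrt_pos.2 h1
  rw [Pv_eq]
  have hterm : ∀ g ∈ Finset.Icc 1 M,
      ((zeF g).card : ℝ)/2^g * y^g ≤ y^g / Real.sqrt g := by
    intro g hg
    simp only [Finset.mem_Icc] at hg
    have hg1 : 1 ≤ g := hg.1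
    have hsg : (0:ℝ) < Real.sqrt g := Real.sqrt_pos.2 (by exact_mod_cast hg1)
    have hsg' : Real.sqrt g ≤ Real.sqrt (g+1) := Real.sqrt_le_sqrt (by linarith)
    have h2 : ((zeF g).card : ℝ) ≤ 2^g / Real.sqrt (g+1) := zeF_real g
    have h3 : ((zeF g).card : ℝ)/2^g ≤ 1 / Real.sqrt (g+1) := by
      rw [div_le_div_iff₀ (by positivity) (by positivity)]
      calc ((zeF g).card : ℝ) * Real.sqrt (g+1)
          ≤ (2^g / Real.sqrt (g+1)) * Real.sqrt (g+1) :=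
            mul_le_mul_of_nonneg_right h2 (Real.sqrt_nonneg _)
        _ = 2^g := by field_simp
        _ = 1 * 2^g := by ring
    have h4 : (1:ℝ) / Real.sqrt (g+1) ≤ 1 / Real.sqrt g := by
      apply div_le_div_of_nonneg_left (by norm_num) hsg hsg'
    calc ((zeF g).card : ℝ)/2^g * y^g ≤ (1/Real.sqrt g) * y^g := by
          apply mul_le_mul_of_nonneg_right ?_ (by positivity)
          exact le_trans h3 h4
      _ = y^g / Real.sqrt g := by ring
  have hsum := le_trans (Finset.sum_le_sum hterm) (sqrt_geom_sum_le hy0 hy1 M)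
  have hone : (1:ℝ) ≤ 1 / Real.sqrt (1-y) := by
    rw [le_div_iff₀ hs1, one_mul]
    calc Real.sqrt (1-y) ≤ Real.sqrt 1 := Real.sqrt_le_sqrt (by linarith)
      _ = 1 := Real.sqrt_one
  have : 1 + ∑ g ∈ Finset.Icc 1 M, ((zeF g).card : ℝ)/2^g * y^g
      ≤ 1/Real.sqrt (1-y) + 3/Real.sqrt (1-y) := add_le_add hone hsum
  calc 1 + ∑ g ∈ Finset.Icc 1 M, ((zeF g).card : ℝ)/2^g * y^g
      ≤ 1/Real.sqrt (1-y) + 3/Real.sqrt (1-y) := this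
    _ = 4 / Real.sqrt (1-y) := by ring

lemma QP_le {y : ℝ} (hy0 : 0 ≤ y) (m : ℕ) :
    Qv y m * Pv y m ≤ Pv y (2*m) - 1 := by
  have hP2 : Pv y (2*m) - 1 = ∑ g ∈ Finset.Icc 1 (2*m), ((zeF g).card : ℝ)/2^g * y^g := by
    rw [Pv_eq]; ring
  rw [hP2, Qv, Pv, Finset.sum_mul_sum, ← Finset.sum_product']
  set S := (Finset.Icc 1 m) ×ˢ (Finset.range (m+1)) with hS
  have hmaps : ∀ p ∈ S, p.1 + p.2 ∈ Finset.Icc 1 (2*m) := by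
    rintro ⟨h, c⟩ hp
    simp only [hS, Finset.mem_product, Finset.mem_Icc, Finset.mem_range] at hp
    simp only [Finset.mem_Icc]
    omega
  rw [← Finset.sum_fiberwise_of_maps_to hmaps]
  apply Finset.sum_le_sum
  intro g hg
  simp only [Finset.mem_Icc] at hg
  have hfib : ∀ p ∈ S.filter (fun p : ℕ × ℕ => p.1 + p.2 = g),
      ((frF p.1).card : ℝ)/2^p.1 * y^p.1 * (((zeF p.2).card : ℝ)/2^p.2 * y^p.2)
        = ((frF p.1).card : ℝ) * ((zeF p.2).card : ℝ) * (y^g / 2^g) := by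
    rintro ⟨h, c⟩ hp
    simp only [Finset.mem_filter] at hp
    have hpg : h + c = g := hp.2
    subst hpg
    rw [pow_add, pow_add]
    field_simp
  rw [Finset.sum_congr rfl hfib, ← Finset.sum_mul]
  have hnat : ∑ p ∈ S.filter (fun p : ℕ × ℕ => p.1 + p.2 = g),
      ((frF p.1).card : ℝ) * ((zeF p.2).card : ℝ) ≤ ((zeF g).card : ℝ) := by
    have hsub : S.filter (fun p : ℕ × ℕ => p.1 + p.2 = g)
        ⊆ (Finset.Icc 1 g).image (fun h => (h, g - h)) := by
      rintro ⟨h, c⟩ hp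
      simp only [Finset.mem_filter, hS, Finset.mem_product, Finset.mem_Icc,
        Finset.mem_range] at hp
      rw [Finset.mem_image]
      exact ⟨h, by simp only [Finset.mem_Icc]; omega, by simp; omega⟩
    have hinj : ∀ x ∈ Finset.Icc 1 g, ∀ x' ∈ Finset.Icc 1 g,
        (fun h => (h, g - h)) x = (fun h => (h, g - h)) x' → x = x' := by
      intro x _ x' _ hxy
      simpa using (Prod.ext_iff.1 hxy).1
    calc ∑ p ∈ S.filter (fun p : ℕ × ℕ => p.1 + p.2 = g),
        ((frF p.1).card : ℝ) * ((zeF p.2).card : ℝ)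
        ≤ ∑ p ∈ (Finset.Icc 1 g).image (fun h => (h, g - h)),
            ((frF p.1).card : ℝ) * ((zeF p.2).card : ℝ) := by
          apply Finset.sum_le_sum_of_subset_of_nonneg hsub
          intro p _ _
          positivity
      _ = ∑ h ∈ Finset.Icc 1 g, ((frF h).card : ℝ) * ((zeF (g-h)).card : ℝ) :=
          Finset.sum_image hinj
      _ ≤ ((zeF g).card : ℝ) := by
          have := renewal_ge g
          calc ∑ h ∈ Finset.Icc 1 g, ((frF h).card : ℝ) * ((zeF (g-h)).card : ℝ)
              = ((∑ h ∈ Finset.Icc 1 g, (frF h).card * (zeF (g-h)).card : ℕ) : ℝ) := by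
                push_cast
                rfl
            _ ≤ ((zeF g).card : ℝ) := by exact_mod_cast this
  calc (∑ p ∈ S.filter (fun p : ℕ × ℕ => p.1 + p.2 = g),
        ((frF p.1).card : ℝ) * ((zeF p.2).card : ℝ)) * (y^g/2^g)
      ≤ ((zeF g).card : ℝ) * (y^g/2^g) := by
        apply mul_le_mul_of_nonneg_right hnat
        positivity
    _ = ((zeF g).card : ℝ)/2^g * y^g := by ring

lemma Qv_nonneg {y : ℝ} (hy0 : 0 ≤ y) (m : ℕ) : 0 ≤ Qv y m := by
  apply Finset.sum_nonneg
  intro g _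
  positivity

lemma Qv_le_main {y : ℝ} (hy0 : 0 < y) (hy1 : y < 1) (m : ℕ)
    (hD : ∑ g ∈ Finset.Icc (m+1) (2*m), y^g ≤ 1/2) :
    Qv y m ≤ 1 - Real.sqrt (1-y)/8 := by
  have h1 : (0:ℝ) < 1 - y := by linarith
  have hs1 : (0:ℝ) < Real.sqrt (1-y) := Real.sqrt_pos.2 h1
  have hP1 : 1 ≤ Pv y m := Pv_ge_one hy0.le m
  have hP0 : 0 < Pv y m := by linarith
  have hsplit : Finset.range (2*m+1) = Finset.range (m+1) ∪ Finset.Icc (m+1) (2*m) := by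
    ext x
    simp only [Finset.mem_range, Finset.mem_union, Finset.mem_Icc]
    omega
  have hdisj : Disjoint (Finset.range (m+1)) (Finset.Icc (m+1) (2*m)) := by
    rw [Finset.disjoint_left]
    intro x hx hx'
    simp only [Finset.mem_range] at hx
    simp only [Finset.mem_Icc] at hx'
    omega
  have hP2 : Pv y (2*m) ≤ Pv y m + 1/2 := by
    rw [Pv, Pv, hsplit, Finset.sum_union hdisj]
    have : ∑ g ∈ Finset.Icc (m+1) (2*m), ((zeF g).card : ℝ)/2^g * y^g
        ≤ ∑ g ∈ Finset.Icc (m+1) (2*m), y^g := by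
      apply Finset.sum_le_sum
      intro g _
      have hz : ((zeF g).card : ℝ) ≤ 2^g := by exact_mod_cast zeF_le_pow g
      have : ((zeF g).card : ℝ)/2^g ≤ 1 := by
        rw [div_le_one (by positivity)]
        exact hz
      calc ((zeF g).card : ℝ)/2^g * y^g ≤ 1 * y^g := by
            apply mul_le_mul_of_nonneg_right this (by positivity)
        _ = y^g := one_mul _
    linarith [le_trans this hD]
  have hQP := QP_le hy0.le m
  have hQ : Qv y m * Pv y m ≤ Pv y m - 1/2 := by linarith
  have hPle : Pv y m ≤ 4 / Real.sqrt (1-y) := Pv_le hy0 hy1 m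
  have hkey : Qv y m ≤ 1 - (1/2)/Pv y m := by
    rw [le_sub_iff_add_le, ← le_sub_iff_add_le']
    calc (1/2)/Pv y m ≤ (1/2)/Pv y m := le_refl _
      _ ≤ 1 - Qv y m := by
        rw [div_le_iff₀ hP0]
        nlinarith
  have hfinal : Real.sqrt (1-y)/8 ≤ (1/2)/Pv y m := by
    rw [div_le_div_iff₀ (by norm_num) hP0]
    calc Real.sqrt (1-y) * Pv y m ≤ Real.sqrt (1-y) * (4/Real.sqrt (1-y)) :=
          mul_le_mul_of_nonneg_left hPle (Real.sqrt_nonneg _)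
      _ = 4 := by field_simp
      _ = (1/2) * 8 := by norm_num
  linarith

end Part6
section Part7
open Finset

lemma pow_sub_real {y : ℝ} (hy0 : 0 < y) {g m' : ℕ} (hg : g ≤ m') :
    (1/y)^(m'-g) = (1/y)^m' * y^g := by
  have hyne : y ≠ 0 := ne_of_gt hy0
  have h : (1/y)^(m'-g) * (1/y)^g = (1/y)^m' := by
    rw [← pow_add]
    congr 1
    omega
  have h2 : ((1:ℝ)/y)^g * y^g = 1 := by
    rw [← mul_pow]
    field_simp
    exact one_pow g
  calc (1/y)^(m'-g) = (1/y)^(m'-g) * (((1:ℝ)/y)^g * y^g) := by rw [h2, mul_one]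
    _ = ((1/y)^(m'-g) * (1/y)^g) * y^g := by ring
    _ = (1/y)^m' * y^g := by rw [h]

lemma two_pow_sub_real {g m' : ℕ} (hg : g ≤ m') :
    ((2:ℝ))^(m'-g) * 2^g = 2^m' := by
  rw [← pow_add]
  congr 1
  omega

lemma AF_real_bound {y : ℝ} (hy0 : 0 < y) (hy1 : y ≤ 1) (m : ℕ) :
    ∀ r m', m' ≤ m → ((AF (r+1) m').card : ℝ) ≤ 2^m' * (1/y)^m' * (Qv y m)^r := by
  intro r
  induction r with
  | zero =>
    intro m' _
    have h1 : ((AF 1 m').card : ℝ) ≤ 2^m' := by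
      have : (AF 1 m').card ≤ (signsF m').card :=
        Finset.card_le_card (Finset.filter_subset _ _)
      rw [card_signsF] at this
      exact_mod_cast this
    have h2 : (1:ℝ) ≤ (1/y)^m' := by
      apply one_le_pow₀
      rw [le_div_iff₀ hy0]
      linarith
    calc ((AF 1 m').card : ℝ) ≤ 2^m' := h1
      _ = 2^m' * 1 * 1 := by ring
      _ ≤ 2^m' * (1/y)^m' * (Qv y m)^0 := by
        rw [pow_zero]
        apply mul_le_mul_of_nonneg_right ?_ (by norm_num)
        apply mul_le_mul_of_nonneg_left h2 (by positivity)
  | succ r ih =>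
    intro m' hm'
    have hnat := A_card_le (r+1) m' (by omega)
    have hreal : ((AF (r+1+1) m').card : ℝ)
        ≤ ∑ g ∈ Finset.Icc 1 m', ((frF g).card : ℝ) * ((AF (r+1) (m'-g)).card : ℝ) := by
      calc ((AF (r+1+1) m').card : ℝ)
          ≤ ((∑ g ∈ Finset.Icc 1 m', (frF g).card * (AF (r+1) (m'-g)).card : ℕ) : ℝ) := by
            exact_mod_cast hnat
        _ = ∑ g ∈ Finset.Icc 1 m', ((frF g).card : ℝ) * ((AF (r+1) (m'-g)).card : ℝ) := by
            push_cast
            rfl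
    have hQnn : 0 ≤ Qv y m := Qv_nonneg hy0.le m
    calc ((AF (r+1+1) m').card : ℝ)
        ≤ ∑ g ∈ Finset.Icc 1 m', ((frF g).card : ℝ) * ((AF (r+1) (m'-g)).card : ℝ) := hreal
      _ ≤ ∑ g ∈ Finset.Icc 1 m',
          ((frF g).card : ℝ) * (2^(m'-g) * (1/y)^(m'-g) * (Qv y m)^r) := by
          apply Finset.sum_le_sum
          intro g _
          exact mul_le_mul_of_nonneg_left (ih (m'-g) (by omega)) (by positivity)
      _ = ∑ g ∈ Finset.Icc 1 m',
          (2^m' * (1/y)^m' * (Qv y m)^r) * (((frF g).card : ℝ)/2^g * y^g) := by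
          apply Finset.sum_congr rfl
          intro g hg
          simp only [Finset.mem_Icc] at hg
          rw [pow_sub_real hy0 hg.2, ← two_pow_sub_real hg.2]
          field_simp
      _ = (2^m' * (1/y)^m' * (Qv y m)^r) *
          ∑ g ∈ Finset.Icc 1 m', (((frF g).card : ℝ)/2^g * y^g) := by
          rw [Finset.mul_sum]
      _ ≤ (2^m' * (1/y)^m' * (Qv y m)^r) * Qv y m := by
          apply mul_le_mul_of_nonneg_left ?_ (by positivity)
          rw [Qv]
          apply Finset.sum_le_sum_of_subset_of_nonneg
          · intro g hg
            simp only [Finset.mem_Icc] at hg ⊢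
            omega
          · intro g _ _
            positivity
      _ = 2^m' * (1/y)^m' * (Qv y m)^(r+1) := by ring

lemma BF_real_bound {y : ℝ} (hy0 : 0 < y) (hy1 : y ≤ 1) (m : ℕ) (i : ℤ) (r : ℕ) :
    ((BF i (r+1) m).card : ℝ) ≤ (m+1) * 2^m * (1/y)^m * (Qv y m)^r := by
  have hnat := B_card_le i (r+1) m (by omega)
  have h1y : (1:ℝ) ≤ 1/y := by
    rw [le_div_iff₀ hy0]
    linarith
  have hreal : ((BF i (r+1) m).card : ℝ)
      ≤ ∑ l ∈ Finset.range (m+1), (2:ℝ)^l * ((AF (r+1) (m-l)).card : ℝ) := by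
    calc ((BF i (r+1) m).card : ℝ)
        ≤ ((∑ l ∈ Finset.range (m+1), 2^l * (AF (r+1) (m-l)).card : ℕ) : ℝ) := by
          exact_mod_cast hnat
      _ = ∑ l ∈ Finset.range (m+1), (2:ℝ)^l * ((AF (r+1) (m-l)).card : ℝ) := by
          push_cast
          rfl
  calc ((BF i (r+1) m).card : ℝ)
      ≤ ∑ l ∈ Finset.range (m+1), (2:ℝ)^l * ((AF (r+1) (m-l)).card : ℝ) := hreal
    _ ≤ ∑ l ∈ Finset.range (m+1), (2:ℝ)^l * (2^(m-l) * (1/y)^(m-l) * (Qv y m)^r) := by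
        apply Finset.sum_le_sum
        intro l _
        exact mul_le_mul_of_nonneg_left (AF_real_bound hy0 hy1 m r (m-l) (by omega))
          (by positivity)
    _ ≤ ∑ l ∈ Finset.range (m+1), (2:ℝ)^m * ((1/y)^m * (Qv y m)^r) := by
        apply Finset.sum_le_sum
        intro l hl
        simp only [Finset.mem_range] at hl
        have hll : l ≤ m := by omega
        have he : (2:ℝ)^l * 2^(m-l) = 2^m := by
          rw [← pow_add]
          congr 1
          omega
        have hp : ((1:ℝ)/y)^(m-l) ≤ (1/y)^m :=
          pow_le_pow_right₀ h1y (by omega)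
        have hQnn : (0:ℝ) ≤ (Qv y m)^r := pow_nonneg (Qv_nonneg hy0.le m) r
        calc (2:ℝ)^l * (2^(m-l) * (1/y)^(m-l) * (Qv y m)^r)
            = ((2:ℝ)^l * 2^(m-l)) * ((1/y)^(m-l) * (Qv y m)^r) := by ring
          _ = (2:ℝ)^m * ((1/y)^(m-l) * (Qv y m)^r) := by rw [he]
          _ ≤ (2:ℝ)^m * ((1/y)^m * (Qv y m)^r) := by
              apply mul_le_mul_of_nonneg_left ?_ (by positivity)
              exact mul_le_mul_of_nonneg_right hp hQnn
    _ = (m+1) * 2^m * (1/y)^m * (Qv y m)^r := by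
        rw [Finset.sum_const, Finset.card_range]
        push_cast
        ring

end Part7
section Part8
open Finset

lemma vcount_le (i : ℤ) (s : List ℤ) : vcount i s ≤ s.length + 1 := by
  calc vcount i s ≤ (Finset.range (s.length + 1)).card :=
        Finset.card_le_card (Finset.filter_subset _ _)
    _ = s.length + 1 := Finset.card_range _

lemma BF_empty (i : ℤ) (r m : ℕ) (h : m + 1 < r) : BF i r m = ∅ := by
  apply Finset.eq_empty_of_forall_notMem
  intro s hs
  simp only [BF, Finset.mem_filter] at hs
  have h1 := vcount_le i s
  have h2 : s.length = m := (mem_signsF.1 hs.1).1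
  omega

lemma main_count (m r : ℕ) (hm : 1 ≤ m) (hr2 : 2 ≤ r) (hrm : r ≤ m + 1) (i : ℤ)
    (HD : (m:ℝ) * Real.exp (-((r:ℝ)/(48*m))^2 * m) ≤ 1/2) :
    ((BF i r m).card : ℝ) ≤ (m+1) * 2^m * Real.exp (-(r:ℝ)^2/(4608*m)) := by
  have hmR : (0:ℝ) < m := by exact_mod_cast hm
  have hrR : (2:ℝ) ≤ r := by exact_mod_cast hr2
  have hrmR : (r:ℝ) ≤ m + 1 := by exact_mod_cast hrm
  set δ : ℝ := (r:ℝ)/(48*m) with hδdef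
  have hδ0 : 0 < δ := by positivity
  have hδ1 : δ ≤ 1 := by
    rw [hδdef, div_le_one (by positivity)]
    linarith
  set y : ℝ := Real.exp (-δ^2) with hydef
  have hy0 : 0 < y := Real.exp_pos _
  have hy1 : y < 1 := by
    rw [hydef, Real.exp_lt_one_iff]
    nlinarith
  -- 1 - y ≥ δ²/2
  have h1my : δ^2/2 ≤ 1 - y := by
    have hx : δ^2 ≤ 1 := by nlinarith
    have he : 1 + δ^2 ≤ Real.exp (δ^2) := by
      have := Real.add_one_le_exp (δ^2)
      linarith
    have hy' : y ≤ 1/(1+δ^2) := by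
      rw [hydef, Real.exp_neg, inv_eq_one_div]
      exact one_div_le_one_div_of_le (by positivity) he
    have h2 : 1/(1+δ^2) ≤ 1 - δ^2/2 := by
      rw [div_le_iff₀ (by positivity)]
      nlinarith
    linarith
  have hsq : δ/2 ≤ Real.sqrt (1-y) := by
    have h4 : (δ/2)^2 ≤ 1 - y := by nlinarith
    have := Real.sqrt_le_sqrt h4
    rwa [Real.sqrt_sq (by positivity)] at this
  -- D condition
  have hD : ∑ g ∈ Finset.Icc (m+1) (2*m), y^g ≤ 1/2 := by
    have hterm : ∀ g ∈ Finset.Icc (m+1) (2*m), y^g ≤ y^m := by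
      intro g hg
      simp only [Finset.mem_Icc] at hg
      exact pow_le_pow_of_le_one hy0.le hy1.le (by omega)
    calc ∑ g ∈ Finset.Icc (m+1) (2*m), y^g ≤ ∑ g ∈ Finset.Icc (m+1) (2*m), y^m :=
          Finset.sum_le_sum hterm
      _ = ((Finset.Icc (m+1) (2*m)).card : ℝ) * y^m := by rw [Finset.sum_const]; ring
      _ ≤ (m:ℝ) * y^m := by
          apply mul_le_mul_of_nonneg_right ?_ (by positivity)
          have : (Finset.Icc (m+1) (2*m)).card = m := by
            rw [Nat.card_Icc]
            omega
          rw [this]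
      _ = (m:ℝ) * Real.exp (-δ^2*m) := by
          rw [hydef, ← Real.exp_nat_mul]
          ring_nf
      _ ≤ 1/2 := HD
  have hQ : Qv y m ≤ 1 - δ/16 := by
    have := Qv_le_main hy0 hy1 m hD
    have h8 : δ/16 ≤ Real.sqrt (1-y)/8 := by linarith
    linarith
  -- BF bound
  obtain ⟨rr, hrr⟩ : ∃ rr, r = rr + 1 := ⟨r - 1, by omega⟩
  have hBF := BF_real_bound hy0 hy1.le m i rr
  rw [← hrr] at hBF
  have hinv : (1/y : ℝ) = Real.exp (δ^2) := by
    rw [hydef, Real.exp_neg]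
    field_simp
  have hpow1 : ((1:ℝ)/y)^m = Real.exp (δ^2 * m) := by
    rw [hinv, ← Real.exp_nat_mul]
    ring_nf
  have hQ0 : 0 ≤ Qv y m := Qv_nonneg hy0.le m
  have hQexp : (Qv y m)^rr ≤ Real.exp (-(δ/16) * rr) := by
    have h1 : Qv y m ≤ Real.exp (-(δ/16)) := by
      have := Real.add_one_le_exp (-(δ/16))
      linarith
    calc (Qv y m)^rr ≤ (Real.exp (-(δ/16)))^rr := pow_le_pow_left₀ hQ0 h1 rr
      _ = Real.exp (-(δ/16) * rr) := by rw [← Real.exp_nat_mul]; ring_nf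
  have hexpo : δ^2 * m + (-(δ/16) * rr) ≤ -(r:ℝ)^2/(4608*m) := by
    have hrrR : (r:ℝ)/2 ≤ (rr:ℝ) := by
      have : (rr:ℝ) = (r:ℝ) - 1 := by
        rw [hrr]; push_cast; ring
      linarith
    have step : -(δ/16) * rr ≤ -(δ/16) * ((r:ℝ)/2) := by
      apply mul_le_mul_of_nonpos_left hrrR (by linarith)
    have heq : δ^2 * m + (-(δ/16) * ((r:ℝ)/2)) = -(r:ℝ)^2/(4608*m) := by
      rw [hδdef]
      field_simp
      ring
    linarith
  calc ((BF i r m).card : ℝ) ≤ (m+1) * 2^m * (1/y)^m * (Qv y m)^rr := hBF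
    _ ≤ (m+1) * 2^m * Real.exp (δ^2 * m) * Real.exp (-(δ/16) * rr) := by
        rw [hpow1]
        apply mul_le_mul_of_nonneg_left hQexp (by positivity)
    _ = (m+1) * 2^m * Real.exp (δ^2 * m + (-(δ/16) * rr)) := by
        rw [Real.exp_add]
        ring
    _ ≤ (m+1) * 2^m * Real.exp (-(r:ℝ)^2/(4608*m)) := by
        apply mul_le_mul_of_nonneg_left (Real.exp_le_exp.2 hexpo) (by positivity)

end Part8
section Part9
open Finset

lemma rpow_pow_lb (ε b : ℝ) (hε : 0 < ε) (hb : 0 < b) (p : ℕ) :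
    ∃ C : ℝ, 0 < C ∧ ∀ k : ℕ, 1 ≤ k →
      (k:ℝ)^p ≤ C * Real.exp (b * (k:ℝ)^(2*ε)) := by
  set n := ⌈(p:ℝ)/(2*ε)⌉₊ with hn
  refine ⟨(n.factorial : ℝ)/b^n, by positivity, ?_⟩
  intro k hk
  have hkR : (1:ℝ) ≤ k := by exact_mod_cast hk
  have hkR0 : (0:ℝ) < k := by linarith
  have hx : (0:ℝ) ≤ b * (k:ℝ)^(2*ε) := by positivity
  have hexp : (b * (k:ℝ)^(2*ε))^n / n.factorial ≤ Real.exp (b * (k:ℝ)^(2*ε)) := by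
    refine le_trans ?_ (Real.sum_le_exp_of_nonneg hx (n+1))
    exact Finset.single_le_sum (f := fun i => (b * (k:ℝ)^(2*ε))^i / i.factorial)
      (fun i _ => by positivity) (Finset.self_mem_range_succ n)
  have hpow : (k:ℝ)^p ≤ ((k:ℝ)^(2*ε))^n := by
    have h1 : ((k:ℝ)^(2*ε))^n = (k:ℝ)^((2*ε)*n) := by
      rw [← Real.rpow_natCast ((k:ℝ)^(2*ε)) n, ← Real.rpow_mul hkR0.le]
    have h2 : ((k:ℝ))^p = (k:ℝ)^((p:ℝ)) := (Real.rpow_natCast _ p).symm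
    rw [h1, h2]
    apply Real.rpow_le_rpow_of_exponent_le hkR
    have hceil := Nat.le_ceil ((p:ℝ)/(2*ε))
    rw [div_le_iff₀ (by positivity)] at hceil
    calc (p:ℝ) ≤ (n:ℝ) * (2*ε) := hceil
      _ = 2*ε*(n:ℝ) := by ring
  have hfact : (0:ℝ) < n.factorial := by positivity
  calc ((k:ℝ))^p ≤ ((k:ℝ)^(2*ε))^n := hpow
    _ = ((n.factorial:ℝ)/b^n) * ((b * (k:ℝ)^(2*ε))^n / n.factorial) := by
        rw [mul_pow]
        field_simp
    _ ≤ ((n.factorial:ℝ)/b^n) * Real.exp (b * (k:ℝ)^(2*ε)) :=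
        mul_le_mul_of_nonneg_left hexp (by positivity)

lemma BF_trivial (i : ℤ) (r m : ℕ) : (BF i r m).card ≤ 2^m := by
  calc (BF i r m).card ≤ (signsF m).card := Finset.card_le_card (Finset.filter_subset _ _)
    _ = 2^m := card_signsF m

end Part9
section Part10
open Finset

lemma natcard_le_BF (k : ℕ) (i : ℤ) (x : ℝ) :
    Nat.card {s : Fin (2 * k) → ℤ // (∀ j, s j = 1 ∨ s j = -1) ∧
        x ≤ (((Finset.range (2 * k + 1)).filter fun l => psum s l = i).card : ℝ)}
      ≤ (BF i ⌈x⌉₊ (2*k)).card := by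
  have hmem : ∀ s : Fin (2*k) → ℤ, (∀ j, s j = 1 ∨ s j = -1) →
      x ≤ (((Finset.range (2 * k + 1)).filter fun l => psum s l = i).card : ℝ) →
      List.ofFn s ∈ BF i ⌈x⌉₊ (2*k) := by
    intro s hpm hx
    simp only [BF, Finset.mem_filter]
    constructor
    · rw [mem_signsF]
      refine ⟨List.length_ofFn, ?_⟩
      intro z hz
      rw [List.mem_ofFn] at hz
      obtain ⟨j, rfl⟩ := hz
      exact hpm j
    · have hv : vcount i (List.ofFn s) =
          ((Finset.range (2 * k + 1)).filter fun l => psum s l = i).card := by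
        unfold vcount
        rw [List.length_ofFn]
        congr 1
        apply Finset.filter_congr
        intro l _
        rw [List.sum_take_ofFn]
        unfold psum
        simp
      rw [hv]
      exact Nat.ceil_le.2 hx
  let f : {s : Fin (2 * k) → ℤ // (∀ j, s j = 1 ∨ s j = -1) ∧
        x ≤ (((Finset.range (2 * k + 1)).filter fun l => psum s l = i).card : ℝ)}
      → {l : List ℤ // l ∈ BF i ⌈x⌉₊ (2*k)} :=
    fun s => ⟨List.ofFn s.1, hmem s.1 s.2.1 s.2.2⟩
  have hinj : Function.Injective f := by
    intro a b hab
    apply Subtype.ext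
    have h2 : List.ofFn a.1 = List.ofFn b.1 := congrArg Subtype.val hab
    exact List.ofFn_injective h2
  calc Nat.card {s : Fin (2 * k) → ℤ // (∀ j, s j = 1 ∨ s j = -1) ∧
        x ≤ (((Finset.range (2 * k + 1)).filter fun l => psum s l = i).card : ℝ)}
      ≤ Nat.card {l : List ℤ // l ∈ BF i ⌈x⌉₊ (2*k)} :=
      Nat.card_le_card_of_injective f hinj
    _ = (BF i ⌈x⌉₊ (2*k)).card := by
      rw [Nat.card_eq_fintype_card, Fintype.card_coe]

end Part10
set_option maxHeartbeats 1000000 in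
/-- For a simple random walk of `2k` steps, the occupation time of any level `i` exceeds
`k^{1/2+ε}` with probability at most `C exp(-c k^{2ε})` (counting formulation). -/
theorem walk_occupation_time_tail (ε : ℝ) (hε : 0 < ε) :
    ∃ C : ℝ, 0 < C ∧ ∃ c : ℝ, 0 < c ∧ ∀ k : ℕ, 1 ≤ k → ∀ i : ℤ,
      (Nat.card {s : Fin (2 * k) → ℤ // (∀ j, s j = 1 ∨ s j = -1) ∧
          (k : ℝ) ^ ((1 : ℝ) / 2 + ε) ≤
            (((Finset.range (2 * k + 1)).filter fun l => psum s l = i).card : ℝ)} : ℝ)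
        ≤ C * Real.exp (-c * (k : ℝ) ^ (2 * ε)) * 2 ^ (2 * k) := by
  obtain ⟨C₁, hC₁, hC₁k⟩ := rpow_pow_lb ε (1/18432) hε (by norm_num) 1
  obtain ⟨C₃, hC₃, hC₃k⟩ := rpow_pow_lb ε (1/4608) hε (by norm_num) 2
  set K₀ : ℕ := ⌈4*C₃⌉₊ + 2 with hK₀
  refine ⟨3*C₁ + Real.exp ((1/18432)*(K₀:ℝ)^(2*ε)), by positivity, 1/18432, by norm_num, ?_⟩
  intro k hk i
  set r := ⌈(k:ℝ)^((1:ℝ)/2+ε)⌉₊ with hrdef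
  have hkR : (1:ℝ) ≤ (k:ℝ) := by exact_mod_cast hk
  have hkR0 : (0:ℝ) < (k:ℝ) := by linarith
  have hNB : (Nat.card {s : Fin (2 * k) → ℤ // (∀ j, s j = 1 ∨ s j = -1) ∧
      (k : ℝ) ^ ((1 : ℝ) / 2 + ε) ≤
        (((Finset.range (2 * k + 1)).filter fun l => psum s l = i).card : ℝ)} : ℝ)
      ≤ ((BF i r (2*k)).card : ℝ) := by
    exact_mod_cast natcard_le_BF k i ((k:ℝ)^((1:ℝ)/2+ε))
  have hEpos : (0:ℝ) < Real.exp (-(1/18432) * (k:ℝ)^(2*ε)) := Real.exp_pos _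
  have h2pow : (0:ℝ) < (2:ℝ)^(2*k) := by positivity
  rcases lt_or_ge k K₀ with hsmall | hbig
  · -- small k : trivial bound
    have h1 : ((BF i r (2*k)).card : ℝ) ≤ 2^(2*k) := by
      exact_mod_cast BF_trivial i r (2*k)
    have h2 : (k:ℝ)^(2*ε) ≤ (K₀:ℝ)^(2*ε) :=
      Real.rpow_le_rpow hkR0.le (by exact_mod_cast hsmall.le) (by positivity)
    have h3 : (1:ℝ) ≤ Real.exp ((1/18432)*(K₀:ℝ)^(2*ε)) * Real.exp (-(1/18432) * (k:ℝ)^(2*ε)) := by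
      rw [← Real.exp_add]
      linarith [Real.add_one_le_exp ((1/18432)*(K₀:ℝ)^(2*ε) + -(1/18432) * (k:ℝ)^(2*ε))]
    calc (Nat.card {s : Fin (2 * k) → ℤ // (∀ j, s j = 1 ∨ s j = -1) ∧
          (k : ℝ) ^ ((1 : ℝ) / 2 + ε) ≤
            (((Finset.range (2 * k + 1)).filter fun l => psum s l = i).card : ℝ)} : ℝ)
        ≤ 2^(2*k) := le_trans hNB h1
      _ = 1 * 2^(2*k) := by ring
      _ ≤ (Real.exp ((1/18432)*(K₀:ℝ)^(2*ε)) * Real.exp (-(1/18432) * (k:ℝ)^(2*ε))) * 2^(2*k) :=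
          mul_le_mul_of_nonneg_right h3 h2pow.le
      _ ≤ (3*C₁ + Real.exp ((1/18432)*(K₀:ℝ)^(2*ε))) * Real.exp (-(1/18432) * (k:ℝ)^(2*ε)) * 2^(2*k) := by
          apply mul_le_mul_of_nonneg_right ?_ h2pow.le
          apply mul_le_mul_of_nonneg_right ?_ hEpos.le
          nlinarith
  · -- large k
    have hk2 : 2 ≤ k := by omega
    have hr2 : 2 ≤ r := by
      have hx1 : (1:ℝ) < (k:ℝ)^((1:ℝ)/2+ε) := by
        refine (Real.one_lt_rpow_iff_of_pos hkR0).2 (Or.inl ⟨?_, by linarith⟩)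
        exact_mod_cast (by omega : 1 < k)
      have h5 : (1:ℕ) < r := by
        rw [hrdef]
        exact Nat.lt_ceil.mpr (by push_cast; exact hx1)
      omega
    have hrge : (k:ℝ)^((1:ℝ)/2+ε) ≤ (r:ℝ) := Nat.le_ceil _
    rcases lt_or_ge (2*k+1) r with hbigr | hrm
    · -- BF empty
      have hemp : BF i r (2*k) = ∅ := BF_empty i r (2*k) (by omega)
      rw [hemp] at hNB
      simp only [Finset.card_empty, Nat.cast_zero] at hNB
      refine le_trans hNB ?_
      positivity
    · -- main estimate
      have hrsq : (k:ℝ)^((1:ℝ)+2*ε) ≤ (r:ℝ)^2 := by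
        have hrpos : (0:ℝ) < (k:ℝ)^((1:ℝ)/2+ε) := Real.rpow_pos_of_pos hkR0 _
        have h1 : ((k:ℝ)^((1:ℝ)/2+ε))^(2:ℕ) ≤ (r:ℝ)^(2:ℕ) :=
          pow_le_pow_left₀ hrpos.le hrge 2
        have h2 : ((k:ℝ)^((1:ℝ)/2+ε))^(2:ℕ) = (k:ℝ)^(((1:ℝ)/2+ε)*2) := by
          rw [← Real.rpow_natCast ((k:ℝ)^((1:ℝ)/2+ε)) 2, ← Real.rpow_mul hkR0.le]
          norm_num
        have h3 : ((1:ℝ)/2+ε)*2 = (1:ℝ)+2*ε := by ring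
        rw [h2, h3] at h1
        exact h1
      have hksplit : (k:ℝ)^((1:ℝ)+2*ε) = (k:ℝ) * (k:ℝ)^(2*ε) := by
        rw [Real.rpow_add hkR0, Real.rpow_one]
      have hrsq' : (k:ℝ) * (k:ℝ)^(2*ε) ≤ (r:ℝ)^2 := by rw [← hksplit]; exact hrsq
      have h4C₃ : 4*C₃ ≤ (k:ℝ) := by
        have h1 : (⌈4*C₃⌉₊ : ℝ) ≤ (k:ℝ) := by
          exact_mod_cast (by omega : ⌈4*C₃⌉₊ ≤ k)
        linarith [Nat.le_ceil (4*C₃)]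
      have hkey : (k:ℝ)^2 * Real.exp (-((1:ℝ)/4608) * (k:ℝ)^(2*ε)) ≤ C₃ := by
        have h := mul_le_mul_of_nonneg_right (hC₃k k hk)
          (Real.exp_pos (-((1:ℝ)/4608) * (k:ℝ)^(2*ε))).le
        rw [mul_assoc, ← Real.exp_add] at h
        have he : (1/4608) * (k:ℝ)^(2*ε) + (-((1:ℝ)/4608) * (k:ℝ)^(2*ε)) = 0 := by ring
        rw [he, Real.exp_zero, mul_one] at h
        exact h
      have hcast2 : ((2*k : ℕ):ℝ) = 2*(k:ℝ) := by push_cast; ring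
      have hHD : ((2*k : ℕ):ℝ) * Real.exp (-((r:ℝ)/(48*((2*k : ℕ):ℝ)))^2 * ((2*k : ℕ):ℝ)) ≤ 1/2 := by
        rw [hcast2]
        have hED : -((r:ℝ)/(48*(2*(k:ℝ))))^2 * (2*(k:ℝ)) = -((r:ℝ)^2/(4608*(k:ℝ))) := by
          field_simp
          ring
        rw [hED]
        have hstep1 : (k:ℝ)^(2*ε)/4608 ≤ (r:ℝ)^2/(4608*(k:ℝ)) := by
          rw [div_le_div_iff₀ (by norm_num) (by positivity)]
          nlinarith
        have hstep2 : Real.exp (-((r:ℝ)^2/(4608*(k:ℝ)))) ≤ Real.exp (-((1:ℝ)/4608) * (k:ℝ)^(2*ε)) := by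
          apply Real.exp_le_exp.2
          nlinarith
        calc 2*(k:ℝ) * Real.exp (-((r:ℝ)^2/(4608*(k:ℝ))))
            ≤ 2*(k:ℝ) * Real.exp (-((1:ℝ)/4608) * (k:ℝ)^(2*ε)) :=
              mul_le_mul_of_nonneg_left hstep2 (by positivity)
          _ = (2/(k:ℝ)) * ((k:ℝ)^2 * Real.exp (-((1:ℝ)/4608) * (k:ℝ)^(2*ε))) := by
              field_simp
          _ ≤ (2/(k:ℝ)) * C₃ := mul_le_mul_of_nonneg_left hkey (by positivity)
          _ ≤ 1/2 := by
              rw [div_mul_eq_mul_div, div_le_div_iff₀ hkR0 (by norm_num)]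
              linarith
      have hmain := main_count (2*k) r (by omega) hr2 (by omega) i hHD
      -- assemble
      set A := Real.exp ((1/18432)*(k:ℝ)^(2*ε)) with hA
      set B := Real.exp (-(1/18432) * (k:ℝ)^(2*ε)) with hB
      set E2 := Real.exp (-(1/9216)*(k:ℝ)^(2*ε)) with hE2
      have hAB : A * E2 = B := by
        rw [hA, hE2, hB, ← Real.exp_add]
        congr 1
        ring
      have hm1 : ((2*k:ℕ):ℝ) + 1 ≤ 3*(k:ℝ) := by
        rw [hcast2]
        linarith
      have hC1' : 3*(k:ℝ) ≤ 3*C₁ * A := by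
        have h := hC₁k k hk
        rw [pow_one] at h
        calc 3*(k:ℝ) ≤ 3*(C₁ * A) := by linarith
          _ = 3*C₁*A := by ring
      have hE1 : Real.exp (-(r:ℝ)^2/(4608*((2*k:ℕ):ℝ))) ≤ E2 := by
        rw [hE2]
        apply Real.exp_le_exp.2
        rw [hcast2]
        have h6 : (k:ℝ)^(2*ε)/9216 ≤ (r:ℝ)^2/(9216*(k:ℝ)) := by
          rw [div_le_div_iff₀ (by norm_num) (by positivity)]
          nlinarith
        have h7 : -(r:ℝ)^2/(4608*(2*(k:ℝ))) = -((r:ℝ)^2/(9216*(k:ℝ))) := by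
          ring
        rw [h7]
        linarith
      have hchain : (((2*k:ℕ):ℝ) + 1) * 2^(2*k) * Real.exp (-(r:ℝ)^2/(4608*((2*k:ℕ):ℝ)))
          ≤ (3*C₁*A) * 2^(2*k) * E2 := by
        apply mul_le_mul ?_ hE1 (Real.exp_pos _).le (by positivity)
        apply mul_le_mul_of_nonneg_right (le_trans hm1 hC1') h2pow.le
      calc (Nat.card {s : Fin (2 * k) → ℤ // (∀ j, s j = 1 ∨ s j = -1) ∧
          (k : ℝ) ^ ((1 : ℝ) / 2 + ε) ≤
            (((Finset.range (2 * k + 1)).filter fun l => psum s l = i).card : ℝ)} : ℝ)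
          ≤ ((BF i r (2*k)).card : ℝ) := hNB
        _ ≤ (((2*k:ℕ):ℝ) + 1) * 2^(2*k) * Real.exp (-(r:ℝ)^2/(4608*((2*k:ℕ):ℝ))) := hmain
        _ ≤ (3*C₁*A) * 2^(2*k) * E2 := hchain
        _ = 3*C₁ * B * 2^(2*k) := by rw [← hAB]; ring
        _ ≤ (3*C₁ + Real.exp ((1/18432)*(K₀:ℝ)^(2*ε))) * B * 2^(2*k) := by
            have hBpos : (0:ℝ) < B := Real.exp_pos _
            have hKpos : (0:ℝ) < Real.exp ((1/18432)*(K₀:ℝ)^(2*ε)) := Real.exp_pos _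
            apply mul_le_mul_of_nonneg_right ?_ h2pow.le
            apply mul_le_mul_of_nonneg_right ?_ hBpos.le
            linarith
end
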